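/- Let X be a set, let μ, σ : X → ℝ be functions with σ(x) > 0 for all x, and fix a threshold f⋆ ∈ ℝ. Then a point x⋆ ∈ X maximizes the map x ↦ H_b(Φ((f⋆ − μ(x))/σ(x))) over X if and only if x⋆ minimizes the map x ↦ |f⋆ − μ(x)| / σ(x) over X. -/
import Mathlib


open MeasureTheory ProbabilityTheory Real

/-- The standard Gaussian cumulative distribution function `Φ`. -/
noncomputable def stdGaussianCDF (t : ℝ) : ℝ :=
  (gaussianReal 0 1 (Set.Iic t)).toReal

/-- The binary entropy function `H_b` (natural logarithm, with `0 · log 0 = 0`). -/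
noncomputable def binEnt (p : ℝ) : ℝ :=
  - (p * Real.log p) - (1 - p) * Real.log (1 - p)

/-- Kullback–Leibler divergence between two measures. -/
noncomputable def klDiv {α : Type*} [MeasurableSpace α] (μ ν : Measure α) : ℝ :=
  ∫ x, Real.log (μ.rnDeriv ν x).toReal ∂μ

/-- Mutual information between two random variables: the KL divergence between the joint law
and the product of the marginal laws. -/
noncomputable def mutualInfo {Ω α β : Type*} [MeasurableSpace Ω] [MeasurableSpace α]
    [MeasurableSpace β] (P : Measure Ω) (A : Ω → α) (B : Ω → β) : ℝ :=
  klDiv (P.map (fun ω => (A ω, B ω))) ((P.map A).prod (P.map B))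

lemma binEnt_eq_binEntropy (p : ℝ) : binEnt p = Real.binEntropy p := by
  simp [binEnt, Real.binEntropy, Real.log_inv]; ring

lemma stdGaussianCDF_eq (t : ℝ) :
    stdGaussianCDF t = ∫ x in Set.Iic t, gaussianPDFReal 0 1 x := by
  rw [stdGaussianCDF, gaussianReal_apply_eq_integral 0 one_ne_zero,
    ENNReal.toReal_ofReal]
  exact setIntegral_nonneg measurableSet_Iic fun x _ => gaussianPDFReal_nonneg 0 1 x

lemma gaussianPDFReal_even (x : ℝ) : gaussianPDFReal 0 1 (-x) = gaussianPDFReal 0 1 x := by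
  simp [gaussianPDFReal, neg_sq]

lemma stdGaussianCDF_neg (t : ℝ) : stdGaussianCDF (-t) = 1 - stdGaussianCDF t := by
  have hint := integrable_gaussianPDFReal 0 1
  have h1 : (∫ x in Set.Iic t, gaussianPDFReal 0 1 x) +
      ∫ x in Set.Ioi t, gaussianPDFReal 0 1 x = 1 := by
    rw [intervalIntegral.integral_Iic_add_Ioi hint.integrableOn hint.integrableOn]
    exact integral_gaussianPDFReal_eq_one 0 one_ne_zero
  have h2 : stdGaussianCDF (-t) = ∫ x in Set.Ioi t, gaussianPDFReal 0 1 x := by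
    rw [stdGaussianCDF_eq]
    calc (∫ x in Set.Iic (-t), gaussianPDFReal 0 1 x)
        = ∫ x in Set.Iic (-t), gaussianPDFReal 0 1 (-x) := by
          simp_rw [gaussianPDFReal_even]
      _ = ∫ x in Set.Ioi (-(-t)), gaussianPDFReal 0 1 x :=
          integral_comp_neg_Iic (-t) _
      _ = ∫ x in Set.Ioi t, gaussianPDFReal 0 1 x := by rw [neg_neg]
  rw [h2, stdGaussianCDF_eq]
  linarith

lemma stdGaussianCDF_strictMono : StrictMono stdGaussianCDF := by
  intro s t hst
  have hint := integrable_gaussianPDFReal 0 1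
  simp_rw [stdGaussianCDF_eq]
  have h : (∫ x in Set.Iic t, gaussianPDFReal 0 1 x) -
      ∫ x in Set.Iic s, gaussianPDFReal 0 1 x = ∫ x in s..t, gaussianPDFReal 0 1 x :=
    intervalIntegral.integral_Iic_sub_Iic hint.integrableOn hint.integrableOn
  have hpos : 0 < ∫ x in s..t, gaussianPDFReal 0 1 x := by
    apply intervalIntegral.intervalIntegral_pos_of_pos_on
      hint.intervalIntegrable
      (fun x _ => gaussianPDFReal_pos 0 1 x one_ne_zero) hst
  linarith

lemma stdGaussianCDF_zero : stdGaussianCDF 0 = 1 / 2 := by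
  have := stdGaussianCDF_neg 0
  rw [neg_zero] at this
  linarith

lemma stdGaussianCDF_lt_one (t : ℝ) : stdGaussianCDF t < 1 := by
  have h := stdGaussianCDF_neg t
  have h2 := stdGaussianCDF_eq (-t)
  have hpos : 0 < stdGaussianCDF (-t) := by
    rw [h2]
    rw [MeasureTheory.setIntegral_pos_iff_support_of_nonneg_ae]
    · have : (Function.support (gaussianPDFReal 0 1)) ∩ Set.Iic (-t) = Set.Iic (-t) := by
        apply Set.inter_eq_right.2
        intro x _
        exact Function.mem_support.2 (gaussianPDFReal_pos 0 1 x one_ne_zero).ne'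
      rw [this]
      simp
    · exact Filter.Eventually.of_forall fun x => gaussianPDFReal_nonneg 0 1 x
    · exact (integrable_gaussianPDFReal 0 1).integrableOn
  linarith

/-- Key comparison: `binEnt (Φ a) ≤ binEnt (Φ b) ↔ |b| ≤ |a|`. -/
lemma binEnt_stdGaussianCDF_le_iff (a b : ℝ) :
    binEnt (stdGaussianCDF a) ≤ binEnt (stdGaussianCDF b) ↔ |b| ≤ |a| := by
  have habs : ∀ u : ℝ, binEnt (stdGaussianCDF u) = binEnt (stdGaussianCDF |u|) := by
    intro u
    rcases abs_choice u with h | h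
    · rw [h]
    · rw [h, stdGaussianCDF_neg, binEnt_eq_binEntropy, binEnt_eq_binEntropy,
        Real.binEntropy_one_sub]
  have hmem : ∀ u : ℝ, 0 ≤ u → stdGaussianCDF u ∈ Set.Icc (2⁻¹ : ℝ) 1 := by
    intro u hu
    constructor
    · have := stdGaussianCDF_strictMono.monotone hu
      rw [stdGaussianCDF_zero] at this
      linarith
    · exact (stdGaussianCDF_lt_one u).le
  have hanti : StrictAntiOn (fun u => binEnt (stdGaussianCDF u)) (Set.Ici 0) := by
    intro s hs t ht hst
    have := Real.binEntropy_strictAntiOn (hmem s hs) (hmem t ht)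
      (stdGaussianCDF_strictMono hst)
    simpa [binEnt_eq_binEntropy] using this
  rw [habs a, habs b]
  constructor
  · intro h
    by_contra hc
    push_neg at hc
    have := hanti (Set.mem_Ici.2 (abs_nonneg a)) (Set.mem_Ici.2 (abs_nonneg b)) hc
    simp only at this
    linarith
  · intro h
    rcases eq_or_lt_of_le h with h | h
    · rw [h]
    · exact (hanti (Set.mem_Ici.2 (abs_nonneg b)) (Set.mem_Ici.2 (abs_nonneg a)) h).le

/-- A point `x⋆` maximizes the entropy-maximization criterion
`x ↦ H_b (Φ ((f⋆ - μ x) / σ x))` iff it minimizes `x ↦ |f⋆ - μ x| / σ x`. -/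
theorem maximize_binEnt_iff_minimize_normalized_gap {X : Type*}
    (μ σ : X → ℝ) (hσ : ∀ x, 0 < σ x) (fstar : ℝ) (xstar : X) :
    (∀ x, binEnt (stdGaussianCDF ((fstar - μ x) / σ x)) ≤
        binEnt (stdGaussianCDF ((fstar - μ xstar) / σ xstar))) ↔
      ∀ x, |fstar - μ xstar| / σ xstar ≤ |fstar - μ x| / σ x := by
  have habs : ∀ x, |fstar - μ x| / σ x = |(fstar - μ x) / σ x| := by
    intro x
    rw [abs_div, abs_of_pos (hσ x)]
  constructor
  · intro h x
    rw [habs x, habs xstar]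
    exact (binEnt_stdGaussianCDF_le_iff _ _).1 (h x)
  · intro h x
    exact (binEnt_stdGaussianCDF_le_iff _ _).2 (by rw [← habs x, ← habs xstar]; exact h x)
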